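/- arXiv:2604.25692 — 3 statements merged into one kernel-verified Lean document; each statement's English description precedes it below -/
import Mathlib

section
/- For n ∈ ℕ with n ≥ 1, λ > 0, and φ ∈ (0, (1/2)·arccos((2λ − n − 1)/(2λ + n + 1))), the quadratic polynomial T(x) = (1 − cos 2φ)x² + (n+1)(sin 2φ)x + (λ² − (λ² + nλ + λ)cos 2φ) has two distinct real roots. -/
theorem stmt_8 (n : ℕ) (hn : 1 ≤ n) (lam : ℝ) (hlam : 0 < lam) (phi : ℝ)
    (hphi : phi ∈ Set.Ioo 0
      ((1 / 2) * Real.arccos ((2 * lam - n - 1) / (2 * lam + n + 1)))) :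
    0 < ((n : ℝ) + 1) ^ 2 * Real.sin (2 * phi) ^ 2 -
        4 * (1 - Real.cos (2 * phi)) *
          (lam ^ 2 - (lam ^ 2 + n * lam + lam) * Real.cos (2 * phi)) := by
  obtain ⟨h0, h1⟩ := hphi
  set r : ℝ := (2 * lam - n - 1) / (2 * lam + n + 1) with hr
  have hn1 : (1 : ℝ) ≤ (n : ℝ) := by exact_mod_cast hn
  have hden : (0 : ℝ) < 2 * lam + n + 1 := by linarith
  have hrlt : r < 1 := by
    rw [hr, div_lt_one hden]; linarith
  have hrgt : -1 < r := by
    rw [hr, lt_div_iff₀ hden]; linarith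
  have hr1 : r ∈ Set.Icc (-1 : ℝ) 1 := ⟨le_of_lt hrgt, le_of_lt hrlt⟩
  have harc : Real.arccos r ≤ Real.pi := Real.arccos_le_pi r
  have h2phi : 2 * phi < Real.arccos r := by linarith
  have h2phi0 : 0 < 2 * phi := by linarith
  have hcosgt : r < Real.cos (2 * phi) := by
    have := Real.strictAntiOn_cos ⟨by linarith, by linarith⟩
      ⟨Real.arccos_nonneg r, harc⟩ h2phi
    rwa [Real.cos_arccos hr1.1 hr1.2] at this
  have hcoslt : Real.cos (2 * phi) < 1 := by
    have := Real.strictAntiOn_cos ⟨le_refl (0:ℝ), Real.pi_nonneg⟩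
      ⟨by linarith, by linarith⟩ h2phi0
    rwa [Real.cos_zero] at this
  have hsin : Real.sin (2 * phi) ^ 2 = 1 - Real.cos (2 * phi) ^ 2 := by
    nlinarith [Real.sin_sq_add_cos_sq (2 * phi)]
  rw [hsin]
  have hkey : 2 * lam - n - 1 < Real.cos (2 * phi) * (2 * lam + n + 1) := by
    have := (div_lt_iff₀ hden).mp hcosgt
    linarith
  have hbr : 0 < ((n : ℝ) + 1) ^ 2 - 4 * lam ^ 2 +
      Real.cos (2 * phi) * (2 * lam + n + 1) ^ 2 := by
    nlinarith [mul_lt_mul_of_pos_right hkey hden]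
  nlinarith [mul_pos (by linarith : (0:ℝ) < 1 - Real.cos (2 * phi)) hbr]
end

section
/- Let n ≥ 1 be an integer and α, β > −1 real. Define T(x) = (x − (α−β)/(2n+α+β+2))·(x − (β² − α²)/((2n+α+β+2)(2n+α+β+4))) − ((2n+α+β+1)/n)·λ, where λ = 4(n+1)(n+α+1)(n+β+1)(n+α+β+2)/((2n+α+β+2)²(2n+α+β+3)(2n+α+β+1)). Then the discriminant of the monic quadratic T is strictly positive; in particular T has two distinct real roots. -/
theorem stmt_12 (n : ℕ) (hn : 1 ≤ n) (α β : ℝ) (hα : -1 < α) (hβ : -1 < β)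
    (lam : ℝ)
    (hlam : lam = 4 * ((n : ℝ) + 1) * (n + α + 1) * (n + β + 1) * (n + α + β + 2) /
      ((2 * n + α + β + 2) ^ 2 * (2 * n + α + β + 3) * (2 * n + α + β + 1)))
    (T : ℝ → ℝ)
    (hT : ∀ x, T x = (x - (α - β) / (2 * n + α + β + 2)) *
        (x - (β ^ 2 - α ^ 2) / ((2 * n + α + β + 2) * (2 * n + α + β + 4))) -
        ((2 * n + α + β + 1) / n) * lam) :
    (0 < ((α - β) / (2 * n + α + β + 2) +
        (β ^ 2 - α ^ 2) / ((2 * n + α + β + 2) * (2 * n + α + β + 4))) ^ 2 -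
        4 * ((α - β) / (2 * n + α + β + 2) *
          ((β ^ 2 - α ^ 2) / ((2 * n + α + β + 2) * (2 * n + α + β + 4))) -
          ((2 * n + α + β + 1) / n) * lam)) ∧
    ∃ r s : ℝ, r ≠ s ∧ T r = 0 ∧ T s = 0 := by
  have hn1 : (1 : ℝ) ≤ (n : ℝ) := by exact_mod_cast hn
  have hnpos : (0 : ℝ) < n := by linarith
  have hlampos : 0 < lam := by
    rw [hlam]
    have h1 : (0 : ℝ) < (n : ℝ) + 1 := by linarith
    have h2 : (0 : ℝ) < (n : ℝ) + α + 1 := by linarith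
    have h3 : (0 : ℝ) < (n : ℝ) + β + 1 := by linarith
    have h4 : (0 : ℝ) < (n : ℝ) + α + β + 2 := by linarith
    have h5 : (0 : ℝ) < 2 * (n : ℝ) + α + β + 2 := by linarith
    have h6 : (0 : ℝ) < 2 * (n : ℝ) + α + β + 3 := by linarith
    have h7 : (0 : ℝ) < 2 * (n : ℝ) + α + β + 1 := by linarith
    positivity
  have hK : 0 < (2 * (n : ℝ) + α + β + 1) / n := by
    apply div_pos (by linarith) hnpos
  set a : ℝ := (α - β) / (2 * n + α + β + 2) with ha
  set b : ℝ := (β ^ 2 - α ^ 2) / ((2 * n + α + β + 2) * (2 * n + α + β + 4)) with hb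
  set K : ℝ := (2 * (n : ℝ) + α + β + 1) / n * lam with hKdef
  have hKpos : 0 < K := mul_pos hK hlampos
  have hdisc : 0 < (a + b) ^ 2 - 4 * (a * b - K) := by nlinarith [sq_nonneg (a - b)]
  refine ⟨hdisc, ?_⟩
  set D : ℝ := (a + b) ^ 2 - 4 * (a * b - K) with hD
  have hs : Real.sqrt D ^ 2 = D := Real.sq_sqrt hdisc.le
  have hspos : 0 < Real.sqrt D := Real.sqrt_pos.mpr hdisc
  refine ⟨(a + b + Real.sqrt D) / 2, (a + b - Real.sqrt D) / 2, by intro h; nlinarith, ?_, ?_⟩ <;>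
  · rw [hT]
    nlinarith [hs]
end

section
/- Let P be a real polynomial of degree n (n ≥ 2) with all zeros real and simple, and let y_1 < ⋯ < y_{n+1} be reals, none a zero of P, such that P(y_k)·P(y_{k+1}) < 0 for all k ≠ k₀ (for some fixed k₀ ∈ {1,…,n}) and P(y_{k₀})·P(y_{k₀+1}) > 0, and suppose P(y_{n+1}) and the leading coefficient of P have the same sign. Then P has exactly one zero in each interval (y_k, y_{k+1}) for k ≠ k₀, either zero or two zeros in (y_{k₀}, y_{k₀+1}), and the total number of zeros of P in (y_1, y_{n+1}) is n − 1 or n; in particular at most one zero of P lies outside [y_1, y_{n+1}]. -/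
/-!
Factor `P = (∏ (X - r)) * q` over its real roots `r`; the factor `q` has no real zero, so it has
constant sign, and hence the sign of `P(a) P(b)` is `(-1)` to the number of roots in `(a, b)`.
Thus each of the `n - 1` intervals `(y k, y (k+1))` with `k ≠ k₀` holds an odd, hence positive,
number of the `n` roots, and `(y k₀, y (k₀+1))` an even number. These counts add up to at most
`n`, so the odd ones are all `1` and the even one is `0`: exactly `n - 1` roots lie in
`(y 0, y n)`, and one root lies outside.
-/

open Polynomial

theorem Multiset.prod_map_neg_iff_odd_card_filter {ι R : Type*} [CommRing R] [LinearOrder R]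
    [IsStrictOrderedRing R] (s : Multiset ι) (f : ι → R) (hf : ∀ i ∈ s, f i ≠ 0) :
    (s.map f).prod < 0 ↔ Odd (s.filter fun i => f i < 0).card := by
  induction s using Multiset.induction_on with
  | empty => simp
  | cons a s ih =>
    have hs : ∀ i ∈ s, f i ≠ 0 := fun i hi => hf i (mem_cons_of_mem hi)
    have hprod : (s.map f).prod ≠ 0 := prod_ne_zero fun h0 => by
      obtain ⟨i, hi, hfi⟩ := mem_map.mp h0
      exact hs i hi hfi
    rw [map_cons, prod_cons]
    rcases (hf a (mem_cons_self a s)).lt_or_gt with ha | ha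
    · rw [filter_cons_of_pos (p := fun i => f i < 0) s ha, card_cons, Nat.odd_add_one, ← ih hs,
        mul_neg_iff]
      simp only [ha, ha.not_gt, false_and, true_and, false_or]
      exact ⟨fun h => h.not_gt, fun h => hprod.lt_or_gt.resolve_left h⟩
    · rw [filter_cons_of_neg (p := fun i => f i < 0) s ha.not_gt, ← ih hs, mul_neg_iff]
      simp only [ha, ha.not_gt, false_and, true_and, or_false]

theorem mul_pos_of_continuous_of_forall_ne_zero {f : ℝ → ℝ} (hf : Continuous f)
    (hf0 : ∀ x, f x ≠ 0) (a b : ℝ) : 0 < f a * f b := by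
  by_contra! hab
  have h0 : (0 : ℝ) ∈ Set.uIcc (f a) (f b) := by
    rw [Set.mem_uIcc]
    rcases (hf0 a).lt_or_gt with ha | ha
    · exact Or.inl ⟨ha.le, by nlinarith⟩
    · exact Or.inr ⟨by nlinarith, ha.le⟩
  obtain ⟨c, -, hc⟩ := intermediate_value_uIcc hf.continuousOn h0
  exact hf0 c hc

theorem Polynomial.eval_mul_eval_neg_iff_odd_card_roots {P : ℝ[X]} {a b : ℝ} (hab : a < b)
    (ha : P.eval a ≠ 0) (hb : P.eval b ≠ 0) :
    P.eval a * P.eval b < 0 ↔ Odd (P.roots.filter fun r => a < r ∧ r < b).card := by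
  obtain ⟨q, hPq, -, hq⟩ := P.exists_prod_multiset_X_sub_C_mul
  have heval : ∀ x, P.eval x = (P.roots.map fun r => x - r).prod * q.eval x := by
    intro x
    conv_lhs => rw [← hPq]
    rw [eval_mul, eval_multiset_prod, Multiset.map_map]
    simp only [Function.comp_def, eval_sub, eval_X, eval_C]
  have hq_ne : ∀ x, q.eval x ≠ 0 := by
    intro x hx
    have hq0 : q ≠ 0 := by
      rintro rfl
      exact ha (by rw [← hPq, mul_zero, eval_zero])
    simpa [hq] using (mem_roots hq0).mpr hx
  have hq_pos : 0 < q.eval a * q.eval b :=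
    mul_pos_of_continuous_of_forall_ne_zero q.continuous hq_ne a b
  have hfactor_ne : ∀ r ∈ P.roots, (a - r) * (b - r) ≠ 0 := by
    intro r hr
    have hPr : P.eval r = 0 := isRoot_of_mem_roots hr
    exact mul_ne_zero (sub_ne_zero.mpr fun h => ha (h ▸ hPr))
      (sub_ne_zero.mpr fun h => hb (h ▸ hPr))
  have hfactor_neg : ∀ r, (a - r) * (b - r) < 0 ↔ a < r ∧ r < b := by
    intro r
    rw [mul_neg_iff]
    constructor
    · rintro (⟨h₁, h₂⟩ | ⟨h₁, h₂⟩) <;> constructor <;> linarith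
    · rintro ⟨h₁, h₂⟩
      exact Or.inr ⟨by linarith, by linarith⟩
  calc P.eval a * P.eval b < 0
      ↔ (P.roots.map fun r => (a - r) * (b - r)).prod * (q.eval a * q.eval b) < 0 := by
        rw [heval, heval, Multiset.prod_map_mul]
        ring_nf
    _ ↔ (P.roots.map fun r => (a - r) * (b - r)).prod < 0 :=
        ⟨fun h => neg_of_mul_neg_left h hq_pos.le, fun h => mul_neg_of_neg_of_pos h hq_pos⟩
    _ ↔ Odd (P.roots.filter fun r => (a - r) * (b - r) < 0).card :=
        Multiset.prod_map_neg_iff_odd_card_filter _ _ hfactor_ne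
    _ ↔ Odd (P.roots.filter fun r => a < r ∧ r < b).card := by
        simp only [hfactor_neg]

theorem Polynomial.eval_mul_eval_pos_iff_even_card_roots {P : ℝ[X]} {a b : ℝ} (hab : a < b)
    (ha : P.eval a ≠ 0) (hb : P.eval b ≠ 0) :
    0 < P.eval a * P.eval b ↔ Even (P.roots.filter fun r => a < r ∧ r < b).card := by
  rw [← Nat.not_odd_iff_even, ← eval_mul_eval_neg_iff_odd_card_roots hab ha hb, not_lt]
  exact ⟨le_of_lt, fun h => h.lt_of_ne' (mul_ne_zero ha hb)⟩

theorem Fin.exists_castSucc_lt_le_succ {α : Type*} [LinearOrder α] {n : ℕ} (y : Fin (n + 1) → α)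
    {z : α} (h₀ : y 0 < z) (hlast : z ≤ y (Fin.last n)) :
    ∃ k : Fin n, y k.castSucc < z ∧ z ≤ y k.succ := by
  induction n with
  | zero => exact absurd (h₀.trans_le hlast) (lt_irrefl _)
  | succ n ih =>
    by_cases h : z ≤ y (Fin.last n).castSucc
    · obtain ⟨k, hk⟩ := ih (y ∘ Fin.castSucc) h₀ h
      exact ⟨k.castSucc, hk⟩
    · exact ⟨Fin.last n, lt_of_not_ge h, hlast⟩

theorem Finset.card_filter_lt_lt_last_eq_sum {α : Type*} [LinearOrder α] {n : ℕ}
    {y : Fin (n + 1) → α} (hy : Monotone y) (S : Finset α) (hS : ∀ j, y j ∉ S) :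
    (S.filter fun z => y 0 < z ∧ z < y (Fin.last n)).card =
      ∑ k : Fin n, (S.filter fun z => y k.castSucc < z ∧ z < y k.succ).card := by
  rw [← card_biUnion]
  · congr 1
    ext z
    simp only [mem_filter, mem_biUnion, mem_univ, true_and]
    constructor
    · rintro ⟨hz, h₀, hlast⟩
      obtain ⟨k, hk, hk'⟩ := Fin.exists_castSucc_lt_le_succ y h₀ hlast.le
      exact ⟨k, hz, hk, hk'.lt_of_ne fun h => hS _ (h ▸ hz)⟩
    · rintro ⟨k, hz, hk, hk'⟩
      exact ⟨hz, (hy (Fin.zero_le _)).trans_lt hk, hk'.trans_le (hy (Fin.le_last _))⟩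
  · have hdisj : ∀ k l : Fin n, k < l → Disjoint
        (S.filter fun z => y k.castSucc < z ∧ z < y k.succ)
        (S.filter fun z => y l.castSucc < z ∧ z < y l.succ) := by
      refine fun k l hkl => disjoint_left.mpr fun z hzk hzl => ?_
      have hsep : y k.succ ≤ y l.castSucc := hy (Fin.succ_le_castSucc_iff.mpr hkl)
      exact ((mem_filter.mp hzk).2.2.trans_le hsep).not_gt (mem_filter.mp hzl).2.1
    intro k _ l _ hkl
    exact hkl.lt_or_gt.elim (hdisj k l) fun h => (hdisj l k h).symm

theorem Finset.filter_le_le_eq_filter_lt_lt {α : Type*} [LinearOrder α] (S : Finset α) {a b : α}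
    (ha : a ∉ S) (hb : b ∉ S) :
    S.filter (fun z => a ≤ z ∧ z ≤ b) = S.filter fun z => a < z ∧ z < b :=
  filter_congr fun _ hz => ⟨fun h => ⟨h.1.lt_of_ne (ne_of_mem_of_not_mem hz ha).symm,
    h.2.lt_of_ne (ne_of_mem_of_not_mem hz hb)⟩, fun h => ⟨h.1.le, h.2.le⟩⟩

theorem Fintype.sum_ite_eq_zero_else_one {ι : Type*} [Fintype ι] [DecidableEq ι] (i₀ : ι) :
    ∑ i, (if i = i₀ then 0 else 1) = Fintype.card ι - 1 := by
  simp [Finset.sum_ite, Finset.filter_ne']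

theorem Fintype.eq_ite_of_odd_of_even_of_sum_le_card {ι : Type*} [Fintype ι] [DecidableEq ι] (f : ι → ℕ)
    (i₀ : ι) (hodd : ∀ i ≠ i₀, Odd (f i)) (heven : Even (f i₀))
    (hsum : ∑ i, f i ≤ Fintype.card ι) :
    ∀ i, f i = if i = i₀ then 0 else 1 := by
  set c : ι → ℕ := fun i => if i = i₀ then 0 else 1
  have hc : ∀ i, c i ≤ f i := by
    intro i
    by_cases hi : i = i₀
    · simp [c, hi]
    · simpa [c, hi, Nat.one_le_iff_ne_zero] using (hodd i hi).pos.ne'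
  have hexcess : ∑ i, (f i - c i) ≤ 1 := by
    have hsplit : ∑ i, f i = ∑ i, (f i - c i) + ∑ i, c i := by
      rw [← Finset.sum_add_distrib]
      exact Finset.sum_congr rfl fun i _ => (Nat.sub_add_cancel (hc i)).symm
    have : 0 < Fintype.card ι := Fintype.card_pos_iff.mpr ⟨i₀⟩
    rw [Fintype.sum_ite_eq_zero_else_one] at hsplit
    omega
  intro i
  have hi : f i - c i ≤ 1 :=
    (Finset.single_le_sum (fun j _ => Nat.zero_le _) (Finset.mem_univ i)).trans hexcess
  by_cases h : i = i₀
  · subst h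
    obtain ⟨m, hm⟩ := heven
    simp only [c, if_true] at hi ⊢
    omega
  · obtain ⟨m, hm⟩ := hodd i h
    simp only [c, h, if_false] at hi ⊢
    omega

theorem stmt_16_general (n : ℕ) (P : Polynomial ℝ)
    (hroots : P.roots.card = n) (hsimple : P.roots.Nodup)
    (y : Fin (n + 1) → ℝ) (hy : StrictMono y)
    (hPy : ∀ j : Fin (n + 1), P.eval (y j) ≠ 0)
    (k₀ : Fin n)
    (hsign : ∀ k : Fin n, k ≠ k₀ → P.eval (y k.castSucc) * P.eval (y k.succ) < 0)
    (hk₀ : 0 < P.eval (y k₀.castSucc) * P.eval (y k₀.succ)) :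
    (∀ k : Fin n, k ≠ k₀ →
        (P.roots.toFinset.filter
          (fun z => y k.castSucc < z ∧ z < y k.succ)).card = 1) ∧
    ((P.roots.toFinset.filter
        (fun z => y k₀.castSucc < z ∧ z < y k₀.succ)).card = 0 ∨
      (P.roots.toFinset.filter
        (fun z => y k₀.castSucc < z ∧ z < y k₀.succ)).card = 2) ∧
    ((P.roots.toFinset.filter
        (fun z => y 0 < z ∧ z < y (Fin.last n))).card = n - 1 ∨
      (P.roots.toFinset.filter
        (fun z => y 0 < z ∧ z < y (Fin.last n))).card = n) ∧
    (P.roots.toFinset.filter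
        (fun z => ¬(y 0 ≤ z ∧ z ≤ y (Fin.last n)))).card ≤ 1 := by
  set S := P.roots.toFinset
  have hS : S.card = n := by rw [Multiset.toFinset_card_of_nodup hsimple, hroots]
  have hyS : ∀ j, y j ∉ S := fun j hj => hPy j (isRoot_of_mem_roots (Multiset.mem_toFinset.mp hj))
  set f : Fin n → ℕ := fun k => (S.filter fun z => y k.castSucc < z ∧ z < y k.succ).card
  have hf : ∀ k, f k = (P.roots.filter fun z => y k.castSucc < z ∧ z < y k.succ).card := fun k => by
    rw [← Multiset.toFinset_card_of_nodup (hsimple.filter _), Multiset.toFinset_filter]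
  have hlt : ∀ k : Fin n, y k.castSucc < y k.succ := fun k => hy k.castSucc_lt_succ
  have hinside : (S.filter fun z => y 0 < z ∧ z < y (Fin.last n)).card = ∑ k, f k :=
    Finset.card_filter_lt_lt_last_eq_sum hy.monotone S hyS
  have hf_eq := Fintype.eq_ite_of_odd_of_even_of_sum_le_card f k₀
    (fun k hk => hf k ▸ (eval_mul_eval_neg_iff_odd_card_roots (hlt k) (hPy _) (hPy _)).mp
      (hsign k hk))
    (hf k₀ ▸ (eval_mul_eval_pos_iff_even_card_roots (hlt k₀) (hPy _) (hPy _)).mp hk₀)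
    (by rw [Fintype.card_fin, ← hinside]; exact (Finset.card_filter_le _ _).trans hS.le)
  have hinside' : (S.filter fun z => y 0 < z ∧ z < y (Fin.last n)).card = n - 1 := by
    rw [hinside, Finset.sum_congr rfl fun k _ => hf_eq k, Fintype.sum_ite_eq_zero_else_one,
      Fintype.card_fin]
  have houtside := S.card_filter_add_card_filter_not fun z => y 0 ≤ z ∧ z ≤ y (Fin.last n)
  rw [S.filter_le_le_eq_filter_lt_lt (hyS 0) (hyS _), hinside', hS] at houtside
  refine ⟨fun k hk => by simpa [hk] using hf_eq k, Or.inl (by simpa only [if_pos] using hf_eq k₀),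
    Or.inl hinside', by omega⟩

theorem stmt_16 (n : ℕ) (hn : 2 ≤ n) (P : Polynomial ℝ)
    (hdeg : P.natDegree = n) (hroots : P.roots.card = n) (hsimple : P.roots.Nodup)
    (y : Fin (n + 1) → ℝ) (hy : StrictMono y)
    (hPy : ∀ j : Fin (n + 1), P.eval (y j) ≠ 0)
    (k₀ : Fin n)
    (hsign : ∀ k : Fin n, k ≠ k₀ → P.eval (y k.castSucc) * P.eval (y k.succ) < 0)
    (hk₀ : 0 < P.eval (y k₀.castSucc) * P.eval (y k₀.succ))
    (hlead : 0 < P.eval (y (Fin.last n)) * P.leadingCoeff) :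
    (∀ k : Fin n, k ≠ k₀ →
        (P.roots.toFinset.filter
          (fun z => y k.castSucc < z ∧ z < y k.succ)).card = 1) ∧
    ((P.roots.toFinset.filter
        (fun z => y k₀.castSucc < z ∧ z < y k₀.succ)).card = 0 ∨
      (P.roots.toFinset.filter
        (fun z => y k₀.castSucc < z ∧ z < y k₀.succ)).card = 2) ∧
    ((P.roots.toFinset.filter
        (fun z => y 0 < z ∧ z < y (Fin.last n))).card = n - 1 ∨
      (P.roots.toFinset.filter
        (fun z => y 0 < z ∧ z < y (Fin.last n))).card = n) ∧
    (P.roots.toFinset.filter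
        (fun z => ¬(y 0 ≤ z ∧ z ≤ y (Fin.last n)))).card ≤ 1 :=
  stmt_16_general n P hroots hsimple y hy hPy k₀ hsign hk₀
end
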